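/- For λ ≠ −1/α with |λα| < 1 and α > 0, the second moment of the degenerate zero-truncated Poisson random variable satisfies E[X_λ²] = ((1+α)/(1+αλ)) E[X_λ] = (α(1+α)/(1+αλ)²) · e_λ(α)/(e_λ(α)−1). -/

import Mathlib

open Real Filter Finset

/-- λ-falling factorial (x)_{n,λ} = x(x-λ)⋯(x-(n-1)λ). -/
noncomputable def dfall (lam x : ℝ) (n : ℕ) : ℝ := ∏ j ∈ Finset.range n, (x - j * lam)

/-- degenerate exponential e_λ(t) = (1+λt)^{1/λ}. -/
noncomputable def dexp (lam t : ℝ) : ℝ := (1 + lam * t) ^ (1 / lam)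

/-- PMF of the degenerate zero-truncated Poisson random variable (for n ≥ 1). -/
noncomputable def ztP (lam a : ℝ) (n : ℕ) : ℝ :=
  1 / (dexp lam a - 1) * (a ^ n / (Nat.factorial n : ℝ)) * dfall lam 1 n

/-!
Since `(x)_{n,λ} = λⁿ n! C(x/λ, n)`, the binomial series gives
`∑ₙ αⁿ/n! (x)_{n,λ} = (1 + λα)^{x/λ}` for `|λα| < 1`. Multiplying the n-th term by `n` shifts
the index and replaces `x` by `x - λ`, at the cost of a factor `αx`; doing this once or twice
expresses `E[X_λ]` and `E[X_λ²]` through `(1 + λα)^{(1-λ)/λ} = e_λ(α)/(1+λα)` and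
`(1 + λα)^{(1-2λ)/λ} = e_λ(α)/(1+λα)²`.
-/

theorem Real.hasSum_choose_mul_pow (r : ℝ) {x : ℝ} (hx : |x| < 1) :
    HasSum (fun n ↦ Ring.choose r n * x ^ n) ((1 + x) ^ r) := by
  have h := (Real.one_add_rpow_hasFPowerSeriesOnBall_zero (a := r)).hasSum (y := x)
    (by simpa [Metric.mem_eball, edist_dist] using hx)
  simpa only [binomialSeries_apply, List.ofFn_const, List.prod_replicate, smul_eq_mul,
    zero_add] using h

theorem Ring.factorial_mul_choose_eq_prod_range {R : Type*} [CommRing R] [BinomialRing R]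
    (r : R) (n : ℕ) : n.factorial * Ring.choose r n = ∏ j ∈ range n, (r - j) := by
  rw [← descPochhammer_eval_eq_prod_range, ← descPochhammer_map (algebraMap ℤ R),
    Polynomial.eval_map_algebraMap, Polynomial.aeval_eq_smeval,
    Ring.descPochhammer_eq_factorial_smul_choose, nsmul_eq_mul]

theorem hasSum_succ_iff_of_zero {G : Type*} [AddCommGroup G] [TopologicalSpace G]
    [IsTopologicalAddGroup G] {f : ℕ → G} {s : G} (h0 : f 0 = 0) :
    HasSum (fun n ↦ f (n + 1)) s ↔ HasSum f s := by
  simpa [h0] using hasSum_nat_add_iff' (f := f) (g := s) 1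

theorem Real.rpow_sub_div_self {b : ℝ} (hb : 0 < b) {lam : ℝ} (hlam : lam ≠ 0) (x : ℝ) :
    b ^ ((x - lam) / lam) = b ^ (x / lam) / b := by
  rw [sub_div, div_self hlam, rpow_sub hb, rpow_one]

theorem dfall_eq_pow_mul_factorial_mul_choose {lam : ℝ} (hlam : lam ≠ 0) (x : ℝ) (n : ℕ) :
    dfall lam x n = lam ^ n * (n.factorial * Ring.choose (x / lam) n) := by
  rw [Ring.factorial_mul_choose_eq_prod_range, dfall, pow_eq_prod_const, ← prod_mul_distrib]
  refine prod_congr rfl fun j _ ↦ ?_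
  field_simp

theorem dfall_succ (lam x : ℝ) (n : ℕ) : dfall lam x (n + 1) = x * dfall lam (x - lam) n := by
  rw [dfall, dfall, prod_range_succ', mul_comm]
  simp only [Nat.cast_zero, zero_mul, sub_zero, Nat.cast_succ]
  congr 1
  exact prod_congr rfl fun j _ ↦ by ring

noncomputable def degPoissonWeight (lam a x : ℝ) (n : ℕ) : ℝ :=
  a ^ n / n.factorial * dfall lam x n

theorem succ_mul_degPoissonWeight_succ (lam a x : ℝ) (n : ℕ) :
    (n + 1) * degPoissonWeight lam a x (n + 1) = a * x * degPoissonWeight lam a (x - lam) n := by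
  have : (n.factorial : ℝ) ≠ 0 := by positivity
  rw [degPoissonWeight, degPoissonWeight, dfall_succ, Nat.factorial_succ, Nat.cast_mul]
  field_simp
  push_cast
  ring

theorem ztP_eq_mul_degPoissonWeight (lam a : ℝ) (n : ℕ) :
    ztP lam a n = (dexp lam a - 1)⁻¹ * degPoissonWeight lam a 1 n := by
  rw [ztP, degPoissonWeight, one_div, mul_assoc]

section Moments

variable {lam a : ℝ}

theorem hasSum_degPoissonWeight (hlam : lam ≠ 0) (habs : |lam * a| < 1) (x : ℝ) :
    HasSum (degPoissonWeight lam a x) ((1 + lam * a) ^ (x / lam)) := by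
  convert Real.hasSum_choose_mul_pow (x / lam) habs using 2 with n
  have : (n.factorial : ℝ) ≠ 0 := by positivity
  rw [degPoissonWeight, dfall_eq_pow_mul_factorial_mul_choose hlam]
  field_simp
  ring

theorem hasSum_mul_degPoissonWeight (hlam : lam ≠ 0) (habs : |lam * a| < 1) (x : ℝ) :
    HasSum (fun n : ℕ ↦ n * degPoissonWeight lam a x n)
      (a * x * (1 + lam * a) ^ ((x - lam) / lam)) := by
  refine (hasSum_succ_iff_of_zero (by simp)).1 ?_
  push_cast
  simp only [succ_mul_degPoissonWeight_succ]
  exact (hasSum_degPoissonWeight hlam habs (x - lam)).mul_left (a * x)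

theorem hasSum_sq_mul_degPoissonWeight (hlam : lam ≠ 0) (habs : |lam * a| < 1) (x : ℝ) :
    HasSum (fun n : ℕ ↦ (n : ℝ) ^ 2 * degPoissonWeight lam a x n)
      (a * x * (a * (x - lam) * (1 + lam * a) ^ ((x - lam - lam) / lam)
        + (1 + lam * a) ^ ((x - lam) / lam))) := by
  refine (hasSum_succ_iff_of_zero (by simp)).1 ?_
  have hshift (n : ℕ) : ((n + 1 : ℕ) : ℝ) ^ 2 * degPoissonWeight lam a x (n + 1)
      = a * x * (n * degPoissonWeight lam a (x - lam) n + degPoissonWeight lam a (x - lam) n) := by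
    push_cast
    rw [sq, mul_assoc, succ_mul_degPoissonWeight_succ]
    ring
  simp only [hshift]
  exact ((hasSum_mul_degPoissonWeight hlam habs (x - lam)).add
    (hasSum_degPoissonWeight hlam habs (x - lam))).mul_left (a * x)

theorem hasSum_mul_ztP (hlam : lam ≠ 0) (habs : |lam * a| < 1) :
    HasSum (fun n : ℕ ↦ n * ztP lam a n)
      ((dexp lam a - 1)⁻¹ * (a * dexp lam a / (1 + lam * a))) := by
  have hb : 0 < 1 + lam * a := by linarith [(abs_lt.1 habs).1]
  have h := (hasSum_mul_degPoissonWeight hlam habs 1).mul_left (dexp lam a - 1)⁻¹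
  rw [Real.rpow_sub_div_self hb hlam, ← dexp, mul_one, ← mul_div_assoc] at h
  simpa only [ztP_eq_mul_degPoissonWeight, mul_left_comm _ (dexp lam a - 1)⁻¹] using h

theorem hasSum_sq_mul_ztP (hlam : lam ≠ 0) (habs : |lam * a| < 1) :
    HasSum (fun n : ℕ ↦ (n : ℝ) ^ 2 * ztP lam a n)
      ((dexp lam a - 1)⁻¹ * (a * (1 + a) * dexp lam a / (1 + lam * a) ^ 2)) := by
  have hb : 0 < 1 + lam * a := by linarith [(abs_lt.1 habs).1]
  have h := (hasSum_sq_mul_degPoissonWeight hlam habs 1).mul_left (dexp lam a - 1)⁻¹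
  rw [Real.rpow_sub_div_self hb hlam, Real.rpow_sub_div_self hb hlam, ← dexp] at h
  have hval : a * 1 * (a * (1 - lam) * (dexp lam a / (1 + lam * a) / (1 + lam * a))
      + dexp lam a / (1 + lam * a)) = a * (1 + a) * dexp lam a / (1 + lam * a) ^ 2 := by
    field_simp
    ring
  rw [hval] at h
  simpa only [ztP_eq_mul_degPoissonWeight, mul_left_comm _ (dexp lam a - 1)⁻¹] using h

end Moments

theorem stmt3_general (lam a : ℝ) (habs : |lam * a| < 1) :
    (∑' n : ℕ, ((n + 1 : ℕ) : ℝ) ^ 2 * ztP lam a (n + 1)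
        = (1 + a) / (1 + a * lam) * ∑' n : ℕ, ((n + 1 : ℕ) : ℝ) * ztP lam a (n + 1)) ∧
    (∑' n : ℕ, ((n + 1 : ℕ) : ℝ) ^ 2 * ztP lam a (n + 1)
        = a * (1 + a) / (1 + a * lam) ^ 2 * (dexp lam a / (dexp lam a - 1))) := by
  rcases eq_or_ne lam 0 with rfl | hlam
  · -- `1 / 0 = 0` makes `dexp 0 a = 1`, so every `ztP 0 a n` vanishes.
    simp [ztP, dexp]
  have hb : 1 + a * lam ≠ 0 := by rw [mul_comm]; linarith [(abs_lt.1 habs).1]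
  rw [((hasSum_succ_iff_of_zero (by simp)).2 (hasSum_mul_ztP hlam habs)).tsum_eq,
    ((hasSum_succ_iff_of_zero (by simp)).2 (hasSum_sq_mul_ztP hlam habs)).tsum_eq]
  constructor <;> field_simp

theorem stmt3 (lam a : ℝ) (ha : 0 < a) (hne : lam ≠ -(1 / a)) (habs : |lam * a| < 1) :
    (∑' n : ℕ, ((n + 1 : ℕ) : ℝ) ^ 2 * ztP lam a (n + 1)
        = (1 + a) / (1 + a * lam) * ∑' n : ℕ, ((n + 1 : ℕ) : ℝ) * ztP lam a (n + 1)) ∧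
    (∑' n : ℕ, ((n + 1 : ℕ) : ℝ) ^ 2 * ztP lam a (n + 1)
        = a * (1 + a) / (1 + a * lam) ^ 2 * (dexp lam a / (dexp lam a - 1))) :=
  stmt3_general lam a habs
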